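/- arXiv:2007.06703 — 3 statements merged into one kernel-verified Lean document; each statement's English description precedes it below -/
import Mathlib

section
/- Let P be a row-stochastic matrix with stationary distribution d having strictly positive entries, D = diag(d), and Γ a diagonal matrix with diagonal entries in [0,1] with at least one entry strictly less than 1 and such that I − ΓP is invertible. Then the matrix D(ΓP − I) is negative definite in the sense that z^T D (ΓP − I) z < 0 for all nonzero vectors z. -/
open Matrix

theorem stmt_3 {n : ℕ} (P : Matrix (Fin n) (Fin n) ℝ) (d γ : Fin n → ℝ)
    (hPnn : ∀ s s', 0 ≤ P s s') (hProw : ∀ s, ∑ s', P s s' = 1)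
    (hdpos : ∀ s, 0 < d s) (hdsum : ∑ s, d s = 1)
    (hstat : ∀ s', ∑ s, d s * P s s' = d s')
    (hγ : ∀ s, γ s ∈ Set.Icc (0 : ℝ) 1) (hγlt : ∃ s, γ s < 1)
    (hinv : IsUnit (1 - Matrix.diagonal γ * P)) :
    ∀ z : Fin n → ℝ, z ≠ 0 →
      z ⬝ᵥ (Matrix.diagonal d * (Matrix.diagonal γ * P - 1)).mulVec z < 0 := by
  intro z hz
  have hγ0 : ∀ s, 0 ≤ γ s := fun s => (hγ s).1
  have hγ1 : ∀ s, γ s ≤ 1 := fun s => (hγ s).2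
  set B : Fin n → ℝ := fun s => (1/2) * d s * (1 - γ s) * z s ^ 2 with hBdef
  set A : Fin n → Fin n → ℝ := fun s s' =>
    d s * P s s' * ((1/2) * γ s * (z s - z s') ^ 2 + (1/2) * (1 - γ s) * z s' ^ 2) with hAdef
  set Q : Fin n → Fin n → ℝ := fun s s' => d s * γ s * P s s' * z s * z s' with hQdef
  -- nonnegativity
  have hBnn : ∀ s, 0 ≤ B s := by
    intro s
    have h1 := (hdpos s).le
    have h2 : (0:ℝ) ≤ 1 - γ s := by linarith [hγ1 s]
    have h3 : (0:ℝ) ≤ z s ^ 2 := sq_nonneg _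
    simp only [hBdef]
    positivity
  have hAin : ∀ s s', 0 ≤ (1/2) * γ s * (z s - z s') ^ 2 + (1/2) * (1 - γ s) * z s' ^ 2 := by
    intro s s'
    have h2 : (0:ℝ) ≤ 1 - γ s := by linarith [hγ1 s]
    have := hγ0 s
    positivity
  have hAnn : ∀ s s', 0 ≤ A s s' := by
    intro s s'
    exact mul_nonneg (mul_nonneg (hdpos s).le (hPnn s s')) (hAin s s')
  -- expansion of the quadratic form
  have expand : z ⬝ᵥ (Matrix.diagonal d * (Matrix.diagonal γ * P - 1)).mulVec z
      = (∑ s, ∑ s', Q s s') - ∑ s, d s * z s ^ 2 := by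
    have hmv : ∀ s, ((Matrix.diagonal d * (Matrix.diagonal γ * P - 1)).mulVec z) s
        = d s * (γ s * (∑ s', P s s' * z s') - z s) := by
      intro s
      have h1 : ((Matrix.diagonal γ * P - 1).mulVec z) s = γ s * (P.mulVec z) s - z s := by
        rw [sub_mulVec, one_mulVec, Pi.sub_apply, ← mulVec_mulVec, mulVec_diagonal]
      rw [← mulVec_mulVec, mulVec_diagonal, h1]
      simp [mulVec, dotProduct]
    simp only [dotProduct, hmv]
    rw [← Finset.sum_sub_distrib]
    refine Finset.sum_congr rfl fun s _ => ?_
    have : ∑ s', Q s s' = d s * γ s * z s * ∑ s', P s s' * z s' := by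
      rw [Finset.mul_sum]
      exact Finset.sum_congr rfl fun s' _ => by simp only [hQdef]; ring
    rw [this]; ring
  -- the key identity
  have doubleP : ∑ s, ∑ s', (1/2) * d s * P s s' * z s' ^ 2 = (1/2) * ∑ s, d s * z s ^ 2 := by
    rw [Finset.sum_comm, Finset.mul_sum]
    refine Finset.sum_congr rfl fun s' _ => ?_
    have : ∑ s, (1/2) * d s * P s s' * z s' ^ 2 = (∑ s, d s * P s s') * ((1/2) * z s' ^ 2) := by
      rw [Finset.sum_mul]
      exact Finset.sum_congr rfl fun s _ => by ring
    rw [this, hstat s']; ring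
  have key : ∑ s, B s + ((∑ s, ∑ s', A s s') + ∑ s, ∑ s', Q s s') = ∑ s, d s * z s ^ 2 := by
    have step : ∀ s, B s + ∑ s', (A s s' + Q s s')
        = (1/2) * d s * z s ^ 2 + ∑ s', (1/2) * d s * P s s' * z s' ^ 2 := by
      intro s
      have h1 : ∑ s', (A s s' + Q s s')
          = ∑ s', (P s s' * ((1/2) * d s * γ s * z s ^ 2) + (1/2) * d s * P s s' * z s' ^ 2) := by
        refine Finset.sum_congr rfl fun s' _ => ?_
        simp only [hAdef, hQdef]; ring
      rw [h1, Finset.sum_add_distrib, ← Finset.sum_mul, hProw s, one_mul]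
      simp only [hBdef]; ring
    have h2 : ∑ s, (B s + ∑ s', (A s s' + Q s s'))
        = ∑ s, ((1/2) * d s * z s ^ 2 + ∑ s', (1/2) * d s * P s s' * z s' ^ 2) :=
      Finset.sum_congr rfl fun s _ => step s
    rw [Finset.sum_add_distrib, Finset.sum_add_distrib] at h2
    have h3 : ∑ s, ∑ s', (A s s' + Q s s') = (∑ s, ∑ s', A s s') + ∑ s, ∑ s', Q s s' := by
      rw [← Finset.sum_add_distrib]
      exact Finset.sum_congr rfl fun s _ => Finset.sum_add_distrib
    have h4 : ∑ s, (1/2) * d s * z s ^ 2 = (1/2) * ∑ s, d s * z s ^ 2 := by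
      rw [Finset.mul_sum]; exact Finset.sum_congr rfl fun s _ => by ring
    rw [h3, h4, doubleP] at h2
    linarith
  -- strict positivity of B-sum plus A-sum
  have hpos : 0 < ∑ s, B s + ∑ s, ∑ s', A s s' := by
    have hBs : 0 ≤ ∑ s, B s := Finset.sum_nonneg fun s _ => hBnn s
    have hAs : 0 ≤ ∑ s, ∑ s', A s s' :=
      Finset.sum_nonneg fun s _ => Finset.sum_nonneg fun s' _ => hAnn s s'
    rcases hBs.lt_or_eq with h | hB0
    · linarith
    rcases hAs.lt_or_eq with h | hA0
    · linarith
    exfalso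
    -- all terms vanish
    have hB0' : ∀ s, B s = 0 := by
      intro s
      have := (Finset.sum_eq_zero_iff_of_nonneg (fun s _ => hBnn s)).mp hB0.symm
      exact this s (Finset.mem_univ s)
    have hA0' : ∀ s s', A s s' = 0 := by
      intro s s'
      have houter := (Finset.sum_eq_zero_iff_of_nonneg
        (fun s _ => Finset.sum_nonneg fun s' _ => hAnn s s')).mp hA0.symm
      have hinner := (Finset.sum_eq_zero_iff_of_nonneg (fun s' _ => hAnn s s')).mp
        (houter s (Finset.mem_univ s))
      exact hinner s' (Finset.mem_univ s')
    -- consequences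
    have hz0 : ∀ s, γ s < 1 → z s = 0 := by
      intro s hs
      have h := hB0' s
      simp only [hBdef] at h
      by_contra hzs
      have h2 : (0:ℝ) < 1 - γ s := by linarith
      have h3 : (0:ℝ) < z s ^ 2 :=
        lt_of_le_of_ne (sq_nonneg _) (Ne.symm (pow_ne_zero 2 hzs))
      have : (0:ℝ) < 1/2 * d s * (1 - γ s) * z s ^ 2 :=
        mul_pos (mul_pos (mul_pos (by norm_num) (hdpos s)) h2) h3
      linarith
    have heq : ∀ s s', 0 < γ s → 0 < P s s' → z s' = z s := by
      intro s s' hγs hPs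
      have h := hA0' s s'
      simp only [hAdef] at h
      have hdp : d s * P s s' ≠ 0 := ne_of_gt (mul_pos (hdpos s) hPs)
      have hin : (1/2) * γ s * (z s - z s') ^ 2 + (1/2) * (1 - γ s) * z s' ^ 2 = 0 := by
        rcases mul_eq_zero.mp h with h' | h'
        · exact absurd h' hdp
        · exact h'
      have h1 : (0:ℝ) ≤ (1/2) * γ s * (z s - z s') ^ 2 := by positivity
      have h2 : (0:ℝ) ≤ (1/2) * (1 - γ s) * z s' ^ 2 := by
        have : (0:ℝ) ≤ 1 - γ s := by linarith [hγ1 s]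
        positivity
      have h3 : (1/2) * γ s * (z s - z s') ^ 2 = 0 := by linarith
      have h4 : (z s - z s') ^ 2 = 0 := by
        rcases mul_eq_zero.mp h3 with h' | h'
        · exact absurd h' (ne_of_gt (mul_pos (by norm_num) hγs))
        · exact h'
      have := pow_eq_zero_iff (two_ne_zero) |>.mp h4
      linarith [sub_eq_zero.mp this]
    -- (1 - ΓP) z = 0
    have hfix : ∀ s, z s = γ s * ∑ s', P s s' * z s' := by
      intro s
      rcases (hγ0 s).lt_or_eq with hγpos | hγzero
      · -- 0 < γ s : every s' in support of P s has z s' = z s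
        have hsum : ∑ s', P s s' * z s' = z s := by
          have : ∑ s', P s s' * z s' = ∑ s', P s s' * z s := by
            refine Finset.sum_congr rfl fun s' _ => ?_
            rcases (hPnn s s').lt_or_eq with hP | hP
            · rw [heq s s' hγpos hP]
            · rw [← hP]; ring
          rw [this, ← Finset.sum_mul, hProw s, one_mul]
        rw [hsum]
        rcases (hγ1 s).lt_or_eq with h1 | h1
        · rw [hz0 s h1]; ring
        · rw [h1, one_mul]
      · rw [← hγzero, zero_mul]
        exact hz0 s (by rw [← hγzero]; norm_num)
    have hMz : (1 - Matrix.diagonal γ * P).mulVec z = 0 := by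
      funext s
      rw [sub_mulVec, one_mulVec, ← mulVec_mulVec]
      simp only [Pi.sub_apply, Pi.zero_apply, mulVec_diagonal]
      have : (P.mulVec z) s = ∑ s', P s s' * z s' := by
        simp [mulVec, dotProduct]
      rw [this, ← hfix s, sub_self]
    -- contradiction with invertibility
    obtain ⟨u, hu⟩ := hinv
    apply hz
    have : z = ((↑u⁻¹ : Matrix (Fin n) (Fin n) ℝ) * (↑u : Matrix (Fin n) (Fin n) ℝ)).mulVec z := by
      rw [u.inv_mul, one_mulVec]
    rw [this, ← mulVec_mulVec, hu, hMz, mulVec_zero]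
  rw [expand]
  linarith
end

section
/- Let P be a stochastic matrix with positive stationary distribution d, D = diag(d), and Γ diagonal with entries in [0,1] such that ρ(P^T Γ) < 1. Then the affine operator T̄ y = c + D^{-1} P^T Γ D y is a contraction mapping with respect to some weighted maximum norm ||·||^w_∞ with strictly positive weight vector w. -/
open Matrix

noncomputable def specRad {n : ℕ} (Y : Matrix (Fin n) (Fin n) ℝ) : ℝ :=
  sSup ((fun μ => ‖μ‖) '' spectrum ℂ (Y.map ((↑) : ℝ → ℂ)))

noncomputable def vecWNorm {n : ℕ} (w : Fin n → ℝ) (y : Fin n → ℝ) : ℝ :=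
  ⨆ i, |y i / w i|

/-!
Write `B = Pᵀ Γ`, a nonnegative matrix with `ρ(B) < 1`. By Gelfand's formula the Neumann series
`N = ∑ Bᵐ` converges, and `w = N 𝟙` satisfies `B w = w - 1` and `w ≥ 1`, hence `B w ≤ k w` with
`k = maxᵢ (1 - 1 / wᵢ) < 1`. For a nonnegative matrix such a row bound is exactly a contraction
by `k` in the `w`-weighted max norm. Finally `T̄ y₁ - T̄ y₂ = D⁻¹ B D (y₁ - y₂)`, and `D⁻¹ B D`
obeys the same bound with the weight `D⁻¹ w`.
-/

open Filter

theorem summable_pow_of_spectralRadius_lt_one {A : Type*} [NormedRing A] [NormedAlgebra ℂ A]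
    [CompleteSpace A] {a : A} (ha : spectralRadius ℂ a < 1) : Summable (a ^ ·) := by
  obtain ⟨r, har, hr1⟩ := ENNReal.lt_iff_exists_nnreal_btwn.1 ha
  refine .of_norm_bounded_eventually_nat
    (summable_geometric_of_lt_one r.coe_nonneg (by exact_mod_cast hr1)) ?_
  have gelfand := spectrum.pow_nnnorm_pow_one_div_tendsto_nhds_spectralRadius a
  filter_upwards [gelfand.eventually_lt_const har, eventually_gt_atTop 0] with m hm hm0
  rw [one_div, ENNReal.rpow_inv_lt_iff (Nat.cast_pos.2 hm0), ENNReal.rpow_natCast] at hm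
  exact_mod_cast hm.le

theorem spectralRadius_map_ofReal_le_specRad {n : ℕ} (A : Matrix (Fin n) (Fin n) ℝ) :
    spectralRadius ℂ (A.map ((↑) : ℝ → ℂ)) ≤ ENNReal.ofReal (specRad A) := by
  refine iSup₂_le fun z hz => ?_
  have hbdd : BddAbove ((fun μ => ‖μ‖) '' spectrum ℂ (A.map ((↑) : ℝ → ℂ))) :=
    ((Matrix.finite_spectrum _).image _).bddAbove
  rw [← ENNReal.ofReal_coe_nnreal, coe_nnnorm]
  exact ENNReal.ofReal_le_ofReal (le_csSup hbdd ⟨z, hz, rfl⟩)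

section

attribute [local instance] Matrix.linftyOpNormedRing Matrix.linftyOpNormedAlgebra

theorem summable_pow_of_specRad_lt_one {n : ℕ} {A : Matrix (Fin n) (Fin n) ℝ}
    (hA : specRad A < 1) : Summable (A ^ ·) := by
  have : CompleteSpace (Matrix (Fin n) (Fin n) ℂ) := FiniteDimensional.complete ℂ _
  have hAc := summable_pow_of_spectralRadius_lt_one
    ((spectralRadius_map_ofReal_le_specRad A).trans_lt (ENNReal.ofReal_lt_one.2 hA))
  convert hAc.map Complex.reAddGroupHom.mapMatrix (continuous_id.matrix_map Complex.continuous_re)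
    using 2 with m
  rw [Function.comp_apply, show A.map ((↑) : ℝ → ℂ) = A.map Complex.ofRealHom from rfl,
    ← Matrix.map_pow]
  ext i j
  simp

end

namespace Matrix

theorem inv_diagonal_eq_diagonal_inv {ι K : Type*} [Fintype ι] [DecidableEq ι] [Field K]
    {d : ι → K} (hd : ∀ i, d i ≠ 0) : (diagonal d)⁻¹ = diagonal d⁻¹ :=
  inv_eq_left_inv <| by
    rw [diagonal_mul_diagonal, ← diagonal_one]
    exact congrArg diagonal (funext fun i => inv_mul_cancel₀ (hd i))

variable {ι : Type*} [Fintype ι] {A : Matrix ι ι ℝ}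

theorem mulVec_apply_nonneg (hA : ∀ i j, 0 ≤ A i j) {v : ι → ℝ} (hv : ∀ i, 0 ≤ v i)
    (i : ι) : 0 ≤ (A *ᵥ v) i :=
  Finset.sum_nonneg fun j _ => mul_nonneg (hA i j) (hv j)

theorem exists_one_le_mulVec_eq_sub_one_of_summable_pow [DecidableEq ι] (hA : ∀ i j, 0 ≤ A i j)
    (hsum : Summable (A ^ ·)) :
    ∃ w : ι → ℝ, (∀ i, 1 ≤ w i) ∧ A *ᵥ w = w - 1 := by
  set N := ∑' m, A ^ m
  have hN : A * N = N - 1 := by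
    have := hsum.one_sub_mul_tsum_pow
    rw [sub_mul, one_mul, sub_eq_iff_eq_add] at this
    exact eq_sub_of_add_eq' this.symm
  have hN_nonneg : ∀ i j, 0 ≤ N i j := fun i j => by
    have hrow : N i = ∑' m, (A ^ m) i := tsum_apply hsum
    rw [hrow, tsum_apply (Pi.summable.1 hsum i)]
    exact tsum_nonneg fun m => pow_apply_nonneg hA m i j
  have hAw : A *ᵥ (N *ᵥ 1) = N *ᵥ 1 - 1 := by
    rw [mulVec_mulVec, hN, sub_mulVec, one_mulVec]
  refine ⟨N *ᵥ 1, fun i => ?_, hAw⟩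
  have h := congrFun hAw i
  have := mulVec_apply_nonneg hA (mulVec_apply_nonneg hN_nonneg (v := 1) fun _ => zero_le_one) i
  simp only [Pi.sub_apply, Pi.one_apply] at h
  linarith

theorem diagonal_mul_mul_diagonal_apply_nonneg [DecidableEq ι] {d e : ι → ℝ}
    (hd : ∀ i, 0 ≤ d i) (he : ∀ i, 0 ≤ e i) (hA : ∀ i j, 0 ≤ A i j) (i j : ι) :
    0 ≤ (diagonal d * A * diagonal e) i j := by
  rw [mul_diagonal, diagonal_mul]
  exact mul_nonneg (mul_nonneg (hd i) (hA i j)) (he j)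

theorem diagonal_inv_mul_mul_diagonal_mulVec_le [DecidableEq ι] {d w : ι → ℝ} {k : ℝ}
    (hd : ∀ i, 0 < d i) (hAw : ∀ i, (A *ᵥ w) i ≤ k * w i) (i : ι) :
    ((diagonal d⁻¹ * A * diagonal d) *ᵥ (d⁻¹ * w)) i ≤ k * (d⁻¹ * w) i := by
  have hdw : diagonal d *ᵥ (d⁻¹ * w) = w := by
    ext j
    simp [mulVec_diagonal, mul_inv_cancel_left₀ (hd j).ne']
  rw [← mulVec_mulVec, ← mulVec_mulVec, hdw, mulVec_diagonal, Pi.mul_apply, Pi.inv_apply,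
    mul_left_comm]
  exact mul_le_mul_of_nonneg_left (hAw i) (inv_nonneg.2 (hd i).le)

end Matrix

theorem exists_lt_forall_le_of_forall_lt {ι : Type*} [Finite ι] {t : ι → ℝ} {b : ℝ}
    (ht : ∀ i, t i < b) : ∃ k < b, ∀ i, t i ≤ k := by
  cases isEmpty_or_nonempty ι
  · exact ⟨b - 1, by linarith, isEmptyElim⟩
  · obtain ⟨i₀, hi₀⟩ := Finite.exists_max t
    exact ⟨t i₀, ht i₀, hi₀⟩

theorem exists_pos_mulVec_le_of_specRad_lt_one {n : ℕ} {A : Matrix (Fin n) (Fin n) ℝ}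
    (hA : ∀ i j, 0 ≤ A i j) (hρ : specRad A < 1) :
    ∃ w : Fin n → ℝ, ∃ k < 1, (∀ i, 0 < w i) ∧ ∀ i, (A *ᵥ w) i ≤ k * w i := by
  obtain ⟨w, hw1, hAw⟩ := exists_one_le_mulVec_eq_sub_one_of_summable_pow hA
    (summable_pow_of_specRad_lt_one hρ)
  have hw : ∀ i, 0 < w i := fun i => one_pos.trans_le (hw1 i)
  obtain ⟨k, hk, hle⟩ := exists_lt_forall_le_of_forall_lt (t := fun i => 1 - (w i)⁻¹) (b := 1)
    fun i => sub_lt_self 1 (inv_pos.2 (hw i))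
  refine ⟨w, k, hk, hw, fun i => ?_⟩
  calc (A *ᵥ w) i = (1 - (w i)⁻¹) * w i := by
        rw [hAw, Pi.sub_apply, Pi.one_apply, sub_mul, one_mul, inv_mul_cancel₀ (hw i).ne']
    _ ≤ k * w i := mul_le_mul_of_nonneg_right (hle i) (hw i).le

section WeightedNorm

variable {n : ℕ} {w : Fin n → ℝ}

theorem vecWNorm_nonneg (w y : Fin n → ℝ) : 0 ≤ vecWNorm w y :=
  Real.iSup_nonneg fun _ => abs_nonneg _

theorem abs_le_mul_vecWNorm (hw : ∀ i, 0 < w i) (y : Fin n → ℝ) (i : Fin n) :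
    |y i| ≤ w i * vecWNorm w y := by
  have := le_ciSup (Set.finite_range fun i => |y i / w i|).bddAbove i
  rwa [abs_div, abs_of_pos (hw i), div_le_iff₀ (hw i), mul_comm] at this

theorem vecWNorm_mulVec_le {A : Matrix (Fin n) (Fin n) ℝ} {k : ℝ} (hA : ∀ i j, 0 ≤ A i j)
    (hw : ∀ i, 0 < w i) (hAw : ∀ i, (A *ᵥ w) i ≤ k * w i) (x : Fin n → ℝ) :
    vecWNorm w (A *ᵥ x) ≤ k * vecWNorm w x := by
  cases isEmpty_or_nonempty (Fin n)
  · simp [vecWNorm]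
  refine ciSup_le fun i => ?_
  set V := vecWNorm w x
  rw [abs_div, abs_of_pos (hw i), div_le_iff₀ (hw i)]
  calc |(A *ᵥ x) i| = |∑ j, A i j * x j| := rfl
    _ ≤ ∑ j, |A i j * x j| := Finset.abs_sum_le_sum_abs _ _
    _ = ∑ j, A i j * |x j| := by simp only [abs_mul, abs_of_nonneg (hA i _)]
    _ ≤ ∑ j, A i j * (w j * V) :=
        Finset.sum_le_sum fun j _ => mul_le_mul_of_nonneg_left (abs_le_mul_vecWNorm hw x j) (hA i j)
    _ = (A *ᵥ w) i * V := by simp only [mulVec, dotProduct, Finset.sum_mul, mul_assoc]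
    _ ≤ k * w i * V := mul_le_mul_of_nonneg_right (hAw i) (vecWNorm_nonneg w x)
    _ = k * V * w i := by ring

end WeightedNorm

theorem stmt_6_general {n : ℕ} (P : Matrix (Fin n) (Fin n) ℝ) (d γ : Fin n → ℝ) (c : Fin n → ℝ)
    (hPnn : ∀ s s', 0 ≤ P s s')
    (hdpos : ∀ s, 0 < d s)
    (hγ : ∀ s, γ s ∈ Set.Icc (0 : ℝ) 1)
    (hρ : specRad (Pᵀ * Matrix.diagonal γ) < 1) :
    let D := Matrix.diagonal d
    let T : (Fin n → ℝ) → (Fin n → ℝ) :=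
      fun y => c + (D⁻¹ * Pᵀ * Matrix.diagonal γ * D).mulVec y
    ∃ (w : Fin n → ℝ) (k : ℝ), (∀ i, 0 < w i) ∧ k < 1 ∧
      ∀ y₁ y₂, vecWNorm w (T y₁ - T y₂) ≤ k * vecWNorm w (y₁ - y₂) := by
  intro D T
  have hB : ∀ i j, 0 ≤ (Pᵀ * diagonal γ) i j := fun i j => by
    rw [mul_diagonal]
    exact mul_nonneg (hPnn j i) (hγ j).1
  obtain ⟨v, k, hk, hv, hBv⟩ := exists_pos_mulVec_le_of_specRad_lt_one hB hρ
  have hM : D⁻¹ * Pᵀ * diagonal γ * D = diagonal d⁻¹ * (Pᵀ * diagonal γ) * diagonal d := by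
    rw [inv_diagonal_eq_diagonal_inv fun i => (hdpos i).ne', Matrix.mul_assoc (diagonal _) Pᵀ]
  have hM_nonneg := diagonal_mul_mul_diagonal_apply_nonneg
    (fun i => inv_nonneg.2 (hdpos i).le) (fun i => (hdpos i).le) hB
  have hw : ∀ i, 0 < (d⁻¹ * v) i := fun i => mul_pos (inv_pos.2 (hdpos i)) (hv i)
  refine ⟨d⁻¹ * v, k, hw, hk, fun y₁ y₂ => ?_⟩
  have hT : T y₁ - T y₂ = (diagonal d⁻¹ * (Pᵀ * diagonal γ) * diagonal d) *ᵥ (y₁ - y₂) := by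
    simp only [T, hM, add_sub_add_left_eq_sub, mulVec_sub]
  rw [hT]
  exact vecWNorm_mulVec_le hM_nonneg hw (diagonal_inv_mul_mul_diagonal_mulVec_le hdpos hBv) _

theorem stmt_6 {n : ℕ} (P : Matrix (Fin n) (Fin n) ℝ) (d γ : Fin n → ℝ) (c : Fin n → ℝ)
    (hPnn : ∀ s s', 0 ≤ P s s') (hProw : ∀ s, ∑ s', P s s' = 1)
    (hdpos : ∀ s, 0 < d s) (hdsum : ∑ s, d s = 1)
    (hstat : ∀ s', ∑ s, d s * P s s' = d s')
    (hγ : ∀ s, γ s ∈ Set.Icc (0 : ℝ) 1)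
    (hρ : specRad (Pᵀ * Matrix.diagonal γ) < 1) :
    let D := Matrix.diagonal d
    let T : (Fin n → ℝ) → (Fin n → ℝ) :=
      fun y => c + (D⁻¹ * Pᵀ * Matrix.diagonal γ * D).mulVec y
    ∃ (w : Fin n → ℝ) (k : ℝ), (∀ i, 0 < w i) ∧ k < 1 ∧
      ∀ y₁ y₂, vecWNorm w (T y₁ - T y₂) ≤ k * vecWNorm w (y₁ - y₂) :=
  stmt_6_general P d γ c hPnn hdpos hγ hρ
end

section
/- If P is a substochastic-type matrix of the form P^T Γ where P is stochastic and Γ diagonal with entries in [0,1] and at least one diagonal entry of Γ strictly less than 1, and P is irreducible, then ρ(P^T Γ) < 1 and hence I − P^T Γ is invertible with inverse Σ_{k≥0} (P^T Γ)^k. -/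
open Matrix

/-!
Put `B = diagonal γ * P`, so that `Pᵀ * diagonal γ = Bᵀ`. The row sums `B ^ k *ᵥ 1` are at most `1`
and nonincreasing in `k`, and at `j₀` (where `γ j₀ < 1`) they drop below `1` already for `k = 1`.
The drop propagates backwards along edges of `P`: if `(P ^ m) i j₀ > 0`, the row sum of
`B ^ (m + 1)` at `i` is below `1`. By irreducibility some power `B ^ M` has all row sums below `1`,
i.e. `‖B ^ M‖ < 1` in the `ℓ∞` operator norm. Then every eigenvalue satisfies `‖μ‖ ^ M < 1`, and the
Neumann series converges, being a geometric series in `B ^ M` times a finite sum. Both facts pass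
to `Bᵀ` by transposition.
-/

theorem summable_pow_of_norm_pow_lt_one {R : Type*} [NormedRing R] [CompleteSpace R] {x : R}
    {M : ℕ} (hM : M ≠ 0) (h : ‖x ^ M‖ < 1) : Summable fun k ↦ x ^ k := by
  have : NeZero M := ⟨hM⟩
  have hblocks : Summable fun p : ℕ × Fin M ↦ (x ^ M) ^ p.1 * x ^ (p.2 : ℕ) :=
    summable_mul_of_summable_norm (f := fun q : ℕ ↦ (x ^ M) ^ q)
      (g := fun s : Fin M ↦ x ^ (s : ℕ)) (summable_norm_geometric_of_norm_lt_one h) .of_finite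
  -- reindex `k` as `M * (k / M) + k % M`
  rw [← (Nat.divModEquiv M).symm.summable_iff]
  refine hblocks.congr fun p ↦ ?_
  simp [Nat.divModEquiv, ← pow_mul, ← pow_add, mul_comm]

theorem spectrum.norm_lt_one_of_norm_pow_lt_one {𝕜 A : Type*} [NormedField 𝕜] [NormedRing A]
    [NormedAlgebra 𝕜 A] [CompleteSpace A] [NormOneClass A] {a : A} {M : ℕ} (hM : M ≠ 0)
    (h : ‖a ^ M‖ < 1) {k : 𝕜} (hk : k ∈ spectrum 𝕜 a) : ‖k‖ < 1 := by
  have hkM : ‖k‖ ^ M < 1 := by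
    rw [← norm_pow]
    exact (spectrum.norm_le_norm_of_mem (spectrum.pow_mem_pow a M hk)).trans_lt h
  exact (pow_lt_one_iff_of_nonneg (norm_nonneg k) hM).mp hkM

theorem Matrix.spectrum_transpose {n K : Type*} [Fintype n] [DecidableEq n] [Field K]
    (A : Matrix n n K) : spectrum K Aᵀ = spectrum K A := by
  ext μ
  simp only [mem_spectrum_iff_isRoot_charpoly, charpoly_transpose]

theorem specRad_lt_one_iff {n : ℕ} (Y : Matrix (Fin n) (Fin n) ℝ) :
    specRad Y < 1 ↔ ∀ μ ∈ spectrum ℂ (Y.map ((↑) : ℝ → ℂ)), ‖μ‖ < 1 := by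
  have hfin := (Matrix.finite_spectrum (Y.map ((↑) : ℝ → ℂ))).image fun μ ↦ ‖μ‖
  rcases Set.eq_empty_or_nonempty ((fun μ ↦ ‖μ‖) '' spectrum ℂ (Y.map ((↑) : ℝ → ℂ)))
    with hempty | hne
  · simp_all [specRad]
  · simp [specRad, hfin.csSup_lt_iff hne]

section Substochastic

theorem Matrix.mulVec_one_apply {m n α : Type*} [Fintype n] [NonAssocSemiring α]
    (A : Matrix m n α) (i : m) : (A *ᵥ 1) i = ∑ j, A i j := by
  simp [mulVec, dotProduct]

theorem Matrix.monotone_mulVec_of_nonneg {m n : Type*} [Fintype n] {B : Matrix m n ℝ}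
    (hB : ∀ i j, 0 ≤ B i j) : Monotone (B *ᵥ ·) :=
  fun _ _ hvw i ↦ Finset.sum_le_sum fun j _ ↦ mul_le_mul_of_nonneg_left (hvw j) (hB i j)

theorem Matrix.mulVec_apply_lt_one {m n : Type*} [Fintype n] {P : Matrix m n ℝ}
    (hP : ∀ i j, 0 ≤ P i j) (hProw : ∀ i, ∑ j, P i j = 1) {w : n → ℝ} (hw : w ≤ 1)
    {i : m} {k : n} (hik : 0 < P i k) (hk : w k < 1) : (P *ᵥ w) i < 1 := by
  calc (P *ᵥ w) i = ∑ j, P i j * w j := rfl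
    _ < ∑ j, P i j := Finset.sum_lt_sum (fun j _ ↦ mul_le_of_le_one_right (hP i j) (hw j))
        ⟨k, Finset.mem_univ k, mul_lt_of_lt_one_right hik hk⟩
    _ = 1 := hProw i

variable {ι : Type*} [Fintype ι] [DecidableEq ι]

theorem Matrix.antitone_pow_mulVec_one {B : Matrix ι ι ℝ} (hB : ∀ i j, 0 ≤ B i j)
    (hB1 : B *ᵥ 1 ≤ 1) : Antitone fun k : ℕ ↦ B ^ k *ᵥ 1 :=
  antitone_nat_of_succ_le fun k ↦ by
    rw [pow_succ, ← mulVec_mulVec]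
    exact monotone_mulVec_of_nonneg (pow_apply_nonneg hB k) hB1

theorem Matrix.pow_mulVec_one_le_one {B : Matrix ι ι ℝ} (hB : ∀ i j, 0 ≤ B i j)
    (hB1 : B *ᵥ 1 ≤ 1) (k : ℕ) : B ^ k *ᵥ 1 ≤ 1 := by
  simpa using antitone_pow_mulVec_one hB hB1 k.zero_le

end Substochastic

section DiagonalMul

variable {ι : Type*} [Fintype ι] [DecidableEq ι] {P : Matrix ι ι ℝ} {γ : ι → ℝ}

theorem Matrix.diagonal_mul_mulVec_one (hProw : ∀ i, ∑ j, P i j = 1) :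
    (diagonal γ * P) *ᵥ 1 = γ := by
  ext i
  simp [mulVec_one_apply, diagonal_mul, ← Finset.mul_sum, hProw]

theorem Matrix.diagonal_mul_apply_nonneg (hP : ∀ i j, 0 ≤ P i j)
    (hγ : ∀ i, γ i ∈ Set.Icc (0 : ℝ) 1) (i j : ι) : 0 ≤ (diagonal γ * P) i j := by
  simpa [diagonal_mul] using mul_nonneg (hγ i).1 (hP i j)

theorem Matrix.diagonal_mul_mulVec_one_le_one (hProw : ∀ i, ∑ j, P i j = 1)
    (hγ : ∀ i, γ i ∈ Set.Icc (0 : ℝ) 1) : (diagonal γ * P) *ᵥ 1 ≤ 1 := by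
  rw [diagonal_mul_mulVec_one hProw]
  exact fun i ↦ (hγ i).2

theorem Matrix.diagonal_mul_pow_succ_mulVec_one_lt_one (hP : ∀ i j, 0 ≤ P i j)
    (hProw : ∀ i, ∑ j, P i j = 1) (hγ : ∀ i, γ i ∈ Set.Icc (0 : ℝ) 1) {j₀ : ι}
    (hj₀ : γ j₀ < 1) (m : ℕ) {i : ι} (hpath : 0 < (P ^ m) i j₀) :
    ((diagonal γ * P) ^ (m + 1) *ᵥ 1) i < 1 := by
  have hB := diagonal_mul_apply_nonneg hP hγ
  have hB1 := diagonal_mul_mulVec_one_le_one hProw hγ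
  induction m generalizing i with
  | zero =>
    obtain rfl : i = j₀ := by
      by_contra hne
      simp [one_apply_ne hne] at hpath
    simpa [diagonal_mul_mulVec_one hProw] using hj₀
  | succ m ih =>
    obtain ⟨k, -, hk⟩ : ∃ k ∈ Finset.univ, 0 < P i k * (P ^ m) k j₀ := by
      rw [pow_succ', mul_apply] at hpath
      exact Finset.exists_lt_of_sum_lt (by simpa using hpath)
    set w := (diagonal γ * P) ^ (m + 1) *ᵥ 1
    have hw0 : 0 ≤ w := by
      simpa using monotone_mulVec_of_nonneg (pow_apply_nonneg hB (m + 1)) zero_le_one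
    have hPw0 : 0 ≤ P *ᵥ w := by simpa using monotone_mulVec_of_nonneg hP hw0
    have hPw : (P *ᵥ w) i < 1 :=
      mulVec_apply_lt_one hP hProw (pow_mulVec_one_le_one hB hB1 _)
        (pos_of_mul_pos_left hk (pow_apply_nonneg hP m k j₀))
        (ih (pos_of_mul_pos_right hk (hP i k)))
    rw [pow_succ', ← mulVec_mulVec, ← mulVec_mulVec, mulVec_diagonal]
    exact mul_lt_one_of_nonneg_of_lt_one_right (hγ i).2 (hPw0 i) hPw

theorem Matrix.exists_pow_diagonal_mul_mulVec_one_lt_one (hP : ∀ i j, 0 ≤ P i j)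
    (hProw : ∀ i, ∑ j, P i j = 1) (hγ : ∀ i, γ i ∈ Set.Icc (0 : ℝ) 1) {j₀ : ι}
    (hj₀ : γ j₀ < 1) (hreach : ∀ i, ∃ m : ℕ, 0 < (P ^ m) i j₀) :
    ∃ M ≠ 0, ∀ i, ((diagonal γ * P) ^ M *ᵥ 1) i < 1 := by
  choose m hm using hreach
  refine ⟨Finset.univ.sup m + 1, Nat.succ_ne_zero _, fun i ↦ ?_⟩
  have hle : m i + 1 ≤ Finset.univ.sup m + 1 :=
    Nat.succ_le_succ (Finset.le_sup (Finset.mem_univ i))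
  exact (antitone_pow_mulVec_one (diagonal_mul_apply_nonneg hP hγ)
    (diagonal_mul_mulVec_one_le_one hProw hγ) hle i).trans_lt
    (diagonal_mul_pow_succ_mulVec_one_lt_one hP hProw hγ hj₀ (m i) (hm i))

end DiagonalMul

section LinftyOpNorm

attribute [local instance] Matrix.linftyOpSeminormedAddCommGroup Matrix.linftyOpNormedRing
  Matrix.linftyOpNormedAlgebra

theorem Matrix.linfty_opNorm_lt_iff {m n α : Type*} [Fintype m] [Fintype n]
    [SeminormedAddCommGroup α] (A : Matrix m n α) {r : ℝ} (hr : 0 < r) :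
    ‖A‖ < r ↔ ∀ i, ∑ j, ‖A i j‖ < r := by
  lift r to NNReal using hr.le
  rw [linfty_opNorm_def, NNReal.coe_lt_coe, Finset.sup_lt_iff (by exact_mod_cast hr)]
  simp [← NNReal.coe_lt_coe]

theorem Matrix.linfty_opNorm_map_ofReal {m n : Type*} [Fintype m] [Fintype n]
    (A : Matrix m n ℝ) : ‖A.map ((↑) : ℝ → ℂ)‖ = ‖A‖ := by
  simp [linfty_opNorm_def]

theorem Matrix.linfty_opNorm_lt_one_of_nonneg {m n : Type*} [Fintype m] [Fintype n]
    {X : Matrix m n ℝ} (hX : ∀ i j, 0 ≤ X i j) (hrow : ∀ i, (X *ᵥ 1) i < 1) : ‖X‖ < 1 := by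
  rw [linfty_opNorm_lt_iff X one_pos]
  intro i
  simpa [Real.norm_of_nonneg (hX i _), mulVec_one_apply] using hrow i

variable {ι : Type*} [Fintype ι] [DecidableEq ι] {B : Matrix ι ι ℝ}

theorem Matrix.summable_pow_of_pow_mulVec_one_lt_one (hB : ∀ i j, 0 ≤ B i j) {M : ℕ}
    (hM : M ≠ 0) (hrow : ∀ i, (B ^ M *ᵥ 1) i < 1) : Summable fun k ↦ B ^ k :=
  summable_pow_of_norm_pow_lt_one hM
    (linfty_opNorm_lt_one_of_nonneg (pow_apply_nonneg hB M) hrow)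

theorem Matrix.norm_lt_one_of_mem_spectrum_map_ofReal (hB : ∀ i j, 0 ≤ B i j) {M : ℕ}
    (hM : M ≠ 0) (hrow : ∀ i, (B ^ M *ᵥ 1) i < 1) {μ : ℂ}
    (hμ : μ ∈ spectrum ℂ (B.map ((↑) : ℝ → ℂ))) : ‖μ‖ < 1 := by
  cases isEmpty_or_nonempty ι
  · simp [spectrum.of_subsingleton] at hμ
  refine spectrum.norm_lt_one_of_norm_pow_lt_one hM ?_ hμ
  have hpow : B.map ((↑) : ℝ → ℂ) ^ M = (B ^ M).map (↑) :=
    (map_pow (Complex.ofRealHom.mapMatrix : Matrix ι ι ℝ →+* Matrix ι ι ℂ) B M).symm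
  rw [hpow, linfty_opNorm_map_ofReal]
  exact linfty_opNorm_lt_one_of_nonneg (pow_apply_nonneg hB M) hrow

end LinftyOpNorm

theorem stmt_18 {n : ℕ} (P : Matrix (Fin n) (Fin n) ℝ) (γ : Fin n → ℝ)
    (hPnn : ∀ i j, 0 ≤ P i j) (hProw : ∀ i, ∑ j, P i j = 1)
    (hirr : ∀ i j, ∃ m : ℕ, 0 < (P ^ m) i j)
    (hγ : ∀ i, γ i ∈ Set.Icc (0 : ℝ) 1) (hγlt : ∃ j, γ j < 1) :
    specRad (Pᵀ * Matrix.diagonal γ) < 1 ∧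
    IsUnit (1 - Pᵀ * Matrix.diagonal γ) ∧
    HasSum (fun k : ℕ => (Pᵀ * Matrix.diagonal γ) ^ k)
      (1 - Pᵀ * Matrix.diagonal γ)⁻¹ := by
  obtain ⟨j₀, hj₀⟩ := hγlt
  obtain ⟨M, hM, hrow⟩ :=
    exists_pow_diagonal_mul_mulVec_one_lt_one hPnn hProw hγ hj₀ fun i ↦ hirr i j₀
  have hB := diagonal_mul_apply_nonneg hPnn hγ
  have hA : Pᵀ * diagonal γ = (diagonal γ * P)ᵀ := by simp [transpose_mul]
  rw [hA]
  set A := (diagonal γ * P)ᵀ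
  have hsum : Summable fun k ↦ A ^ k := by
    simpa [A, transpose_pow] using
      (summable_pow_of_pow_mulVec_one_lt_one hB hM hrow).matrix_transpose
  have hright := hsum.one_sub_mul_tsum_pow
  refine ⟨(specRad_lt_one_iff A).2 fun μ hμ ↦ ?_,
    ⟨⟨1 - A, _, hright, hsum.tsum_pow_mul_one_sub⟩, rfl⟩, ?_⟩
  · rw [transpose_map, spectrum_transpose] at hμ
    exact norm_lt_one_of_mem_spectrum_map_ofReal hB hM hrow hμ
  · rw [inv_eq_right_inv hright]
    exact hsum.hasSum
end
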